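/- arXiv:2302.14810 — 2 statements merged into one kernel-verified Lean document; each statement's English description precedes it below -/
import Mathlib

section
/- Let Q be an orthogonal n×n real matrix (Qᵀ·Q = 1). Then Q·P_0^i·Qᵀ = P_0^i for all 1 ≤ i ≤ r if and only if Q is block diagonal, i.e. Q = Σ_{i=1}^{r} P_0^i · Q · P_0^i. (This identifies the isotropy group of the standard flag P_0 under the action Q · P := (Q·P_i·Qᵀ)_i with the block-diagonal orthogonal matrices.) -/
/-!
Since `Q` is orthogonal, `Q P Qᵀ = P` says exactly that `Q` commutes with `P`. A matrix commutes
with every diagonal 0/1 projector `P_0^i` iff its entries `Q j k` with `j`, `k` in different blocks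
vanish, and this is also the entrywise content of `Q = Σᵢ P_0^i Q P_0^i`.
-/

open Matrix

/-- The standard projector `P_0^i` associated to a block-assignment `b : Fin n → Fin r`:
the diagonal matrix whose `(j,j)` entry is `1` if `b j = i` and `0` otherwise. -/
def stdProj {n r : ℕ} (b : Fin n → Fin r) (i : Fin r) : Matrix (Fin n) (Fin n) ℝ :=
  Matrix.diagonal fun j => if b j = i then (1 : ℝ) else 0

theorem Matrix.mul_mul_transpose_eq_iff_commute {m R : Type*} [Fintype m] [DecidableEq m]
    [CommRing R] {Q : Matrix m m R} (hQ : Qᵀ * Q = 1) (P : Matrix m m R) :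
    Q * P * Qᵀ = P ↔ Commute Q P := by
  have hQ' : Q * Qᵀ = 1 := mul_eq_one_comm.mp hQ
  constructor
  · intro h
    calc Q * P = Q * P * Qᵀ * Q := by rw [Matrix.mul_assoc _ Qᵀ, hQ, Matrix.mul_one]
      _ = P * Q := by rw [h]
  · intro h
    rw [h.eq, Matrix.mul_assoc, hQ', Matrix.mul_one]

section stdProj

variable {n r : ℕ} (b : Fin n → Fin r)

@[simp]
theorem stdProj_mul_apply (i : Fin r) (A : Matrix (Fin n) (Fin n) ℝ) (j k : Fin n) :
    (stdProj b i * A) j k = if b j = i then A j k else 0 := by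
  simp [stdProj, diagonal_mul]

@[simp]
theorem mul_stdProj_apply (i : Fin r) (A : Matrix (Fin n) (Fin n) ℝ) (j k : Fin n) :
    (A * stdProj b i) j k = if b k = i then A j k else 0 := by
  simp [stdProj, mul_diagonal]

theorem sum_stdProj_mul_mul_stdProj_apply (Q : Matrix (Fin n) (Fin n) ℝ) (j k : Fin n) :
    (∑ i, stdProj b i * Q * stdProj b i) j k = if b j = b k then Q j k else 0 := by
  rw [Matrix.sum_apply, Finset.sum_eq_single (b j)]
  · simp [eq_comm]
  · intro i _ hi
    simp [Ne.symm hi]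
  · simp

theorem commute_stdProj_iff (Q : Matrix (Fin n) (Fin n) ℝ) :
    (∀ i, Commute Q (stdProj b i)) ↔ ∀ j k, b j ≠ b k → Q j k = 0 := by
  constructor
  · intro h j k hjk
    simpa [hjk] using congrFun (congrFun (h (b k)).eq j) k
  · intro h i
    ext j k
    by_cases hjk : b j = b k
    · simp [hjk]
    · simp [h j k hjk]

theorem eq_sum_stdProj_mul_mul_stdProj_iff (Q : Matrix (Fin n) (Fin n) ℝ) :
    Q = ∑ i, stdProj b i * Q * stdProj b i ↔ ∀ j k, b j ≠ b k → Q j k = 0 := by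
  constructor
  · intro h j k hjk
    simpa [sum_stdProj_mul_mul_stdProj_apply, hjk] using congrFun (congrFun h j) k
  · intro h
    ext j k
    rw [sum_stdProj_mul_mul_stdProj_apply]
    split_ifs with hjk
    · rfl
    · exact h j k hjk

end stdProj

theorem isotropy_of_standard_flag_iff_block_diagonal_general
    {n r : ℕ} (b : Fin n → Fin r) (Q : Matrix (Fin n) (Fin n) ℝ) (hQ : Qᵀ * Q = 1) :
    (∀ i, Q * stdProj b i * Qᵀ = stdProj b i)
      ↔ Q = ∑ i, stdProj b i * Q * stdProj b i := by
  simp only [mul_mul_transpose_eq_iff_commute hQ]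
  rw [commute_stdProj_iff, eq_sum_stdProj_mul_mul_stdProj_iff]

/-- Let `Q` be an orthogonal `n × n` real matrix.  Then `Q·P_0^i·Qᵀ = P_0^i` for all `i` iff
`Q` is block diagonal, i.e. `Q = Σᵢ P_0^i · Q · P_0^i`.  (The isotropy group of the standard
flag consists of the block-diagonal orthogonal matrices.) -/
theorem isotropy_of_standard_flag_iff_block_diagonal
    {n r : ℕ} (hn : 1 ≤ n) (q : Fin r → ℕ) (hq : ∀ i, 0 < q i)
    (b : Fin n → Fin r)
    (hb : ∀ i, (Finset.univ.filter fun j => b j = i).card = q i)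
    (Q : Matrix (Fin n) (Fin n) ℝ) (hQ : Qᵀ * Q = 1) :
    (∀ i, Q * stdProj b i * Qᵀ = stdProj b i)
      ↔ Q = ∑ i, stdProj b i * Q * stdProj b i :=
  isotropy_of_standard_flag_iff_block_diagonal_general b Q hQ
end

section
/- Let J ⊆ ℝ be an open interval and, for each 1 ≤ i ≤ r, let P_i : J → Matrix (Fin n) (Fin n) ℝ be a map of class C¹ such that for every x ∈ J the family (P_i(x))_{1≤i≤r} is a flag of type I. Then there exists a map Q : J → Matrix (Fin n) (Fin n) ℝ of class C¹ such that for every x ∈ J: Q(x)ᵀ·Q(x) = 1, det Q(x) = 1, and Q(x)·P_0^i·Q(x)ᵀ = P_i(x) for all 1 ≤ i ≤ r. (A C¹ family of special orthogonal frames generating a C¹ family of flags.) -/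
open Matrix

attribute [local instance] Matrix.normedAddCommGroup Matrix.normedSpace

open scoped NNReal Topology

/-!
Kato's adiabatic transport. Put `A = ½ ∑ᵢ [Pᵢ', Pᵢ]`. Differentiating `Pᵢᵀ = Pᵢ`, `Pᵢ² = Pᵢ` and
`PᵢPⱼ = 0`, and using `∑ᵢ Pᵢ = 1`, one finds that `A` is skew-symmetric and `[A, Pᵢ] = Pᵢ'`.
Let `Q` solve `Q' = AQ` starting from a special orthogonal frame of the flag at some `x₀` (an
orthonormal basis adapted to the ranges of the `Pᵢ(x₀)`). Then `QᵀQ` and `QᵀPᵢQ` have zero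
derivative, so `Q` stays orthogonal and keeps generating the flag, while `det Q` is continuous with
values `±1` and therefore stays `1`.

The linear equation is solved on all of `J` by replacing `AQ` with `A r(Q)`, where `r` is the
radial retraction onto the unit ball: this field is bounded and Lipschitz on compact subintervals,
so Picard–Lindelöf applies, and since `r(Q)` is a scalar multiple of `Q` the solution is still
orthogonal, whence `r(Q) = Q`.
-/

section OrthogonalIdempotents

variable {R ι : Type*} [Ring R] {P D : ι → R}

theorem lie_lie_eq_mul_add_mul (hidem : ∀ i, P i * P i = P i)
    (horth : ∀ i j, i ≠ j → P i * P j = 0) (hD : ∀ i, D i * P i + P i * D i = D i)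
    (hDorth : ∀ i j, i ≠ j → D i * P j + P i * D j = 0) (i j : ι) :
    ⁅⁅D j, P j⁆, P i⁆ = P j * D i + D i * P j := by
  simp only [Ring.lie_def]
  rcases eq_or_ne j i with rfl | hji
  · have hPDP : P j * D j * P j = 0 := by
      have h : P j * D j * P j = P j * D j * P j + P j * D j * P j :=
        calc P j * D j * P j = P j * (D j * P j + P j * D j) * P j := by rw [hD]
          _ = P j * D j * (P j * P j) + (P j * P j) * D j * P j := by noncomm_ring
          _ = P j * D j * P j + P j * D j * P j := by rw [hidem]
      exact left_eq_add.1 h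
    calc (D j * P j - P j * D j) * P j - P j * (D j * P j - P j * D j)
        = D j * (P j * P j) + (P j * P j) * D j - 2 • (P j * D j * P j) := by noncomm_ring
      _ = P j * D j + D j * P j := by rw [hidem, hPDP, smul_zero, sub_zero, add_comm]
  · have h₁ : D j * P i = -(P j * D i) := eq_neg_of_add_eq_zero_left (hDorth j i hji)
    have h₂ : P i * D j = -(D i * P j) := eq_neg_of_add_eq_zero_right (hDorth i j hji.symm)
    calc (D j * P j - P j * D j) * P i - P i * (D j * P j - P j * D j)
        = D j * (P j * P i) - P j * (D j * P i) - (P i * D j) * P j + (P i * P j) * D j := by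
          noncomm_ring
      _ = P j * P j * D i + D i * (P j * P j) := by
          rw [horth j i hji, horth i j hji.symm, h₁, h₂]
          noncomm_ring
      _ = P j * D i + D i * P j := by rw [hidem]

theorem lie_sum_lie_eq_two_nsmul [Fintype ι] (hsum : ∑ i, P i = 1)
    (hidem : ∀ i, P i * P i = P i) (horth : ∀ i j, i ≠ j → P i * P j = 0)
    (hD : ∀ i, D i * P i + P i * D i = D i)
    (hDorth : ∀ i j, i ≠ j → D i * P j + P i * D j = 0) (i : ι) :
    ⁅∑ j, ⁅D j, P j⁆, P i⁆ = 2 • D i := by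
  have hlin : ⁅∑ j, ⁅D j, P j⁆, P i⁆ = ∑ j, ⁅⁅D j, P j⁆, P i⁆ := by
    rw [Ring.lie_def, Finset.sum_mul, Finset.mul_sum, ← Finset.sum_sub_distrib]
    simp only [Ring.lie_def]
  rw [hlin, Finset.sum_congr rfl fun j _ => lie_lie_eq_mul_add_mul hidem horth hD hDorth i j,
    Finset.sum_add_distrib, ← Finset.sum_mul, ← Finset.mul_sum, hsum, one_mul, mul_one,
    two_nsmul]

end OrthogonalIdempotents

lemma sum_stdProj {n r : ℕ} (b : Fin n → Fin r) : ∑ i, stdProj b i = 1 := by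
  ext j k
  rw [Matrix.sum_apply]
  rcases eq_or_ne j k with rfl | h <;> simp [stdProj, *]

structure IsFlag {n r : ℕ} (b : Fin n → Fin r) (P : Fin r → Matrix (Fin n) (Fin n) ℝ) : Prop where
  transpose_eq : ∀ i, (P i)ᵀ = P i
  mul_self : ∀ i, P i * P i = P i
  mul_eq_zero : ∀ i j, i ≠ j → P i * P j = 0
  rank_eq : ∀ i, (P i).rank = (Finset.univ.filter fun j => b j = i).card

namespace IsFlag

open scoped RealInnerProductSpace
open Module

variable {n r : ℕ} {b : Fin n → Fin r} {P : Fin r → Matrix (Fin n) (Fin n) ℝ}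

theorem exists_orthonormal_adapted_family (hP : IsFlag b P) :
    ∃ W : Fin n → EuclideanSpace ℝ (Fin n), Orthonormal ℝ W ∧
      ∀ i k, toEuclideanLin (P i) (W k) = if b k = i then W k else 0 := by
  let T : Fin r → EuclideanSpace ℝ (Fin n) →ₗ[ℝ] EuclideanSpace ℝ (Fin n) :=
    fun i => toEuclideanLin (P i)
  let V : Fin r → Submodule ℝ (EuclideanSpace ℝ (Fin n)) := fun i => LinearMap.range (T i)
  have hTT : ∀ i j u, T i (T j u) = toEuclideanLin (P i * P j) u := fun i j u => by
    simp [T]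
  have hfix : ∀ i, ∀ u ∈ V i, T i u = u := by
    rintro i _ ⟨u, rfl⟩
    rw [hTT, hP.mul_self]
  have hkill : ∀ i j, i ≠ j → ∀ u ∈ V j, T i u = 0 := by
    rintro i j hij _ ⟨u, rfl⟩
    rw [hTT, hP.mul_eq_zero i j hij, map_zero, LinearMap.zero_apply]
  have hself : ∀ i, (T i).IsSymmetric := fun i => isSymmetric_toEuclideanLin_iff.2
    ((conjTranspose_eq_transpose_of_trivial _).trans (hP.transpose_eq i))
  have hfam : OrthogonalFamily ℝ (fun i => V i) fun i => (V i).subtypeₗᵢ := by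
    rintro i j hij ⟨u, hu⟩ ⟨w, hw⟩
    change ⟪u, w⟫ = 0
    rw [← hfix i u hu, hself i, hkill i j hij w hw, inner_zero_right]
  have hcard : ∀ i, Fintype.card (Fin (finrank ℝ (V i))) = Fintype.card {j // b j = i} := by
    intro i
    rw [Fintype.card_fin, Fintype.card_subtype, ← hP.rank_eq i,
      rank_eq_finrank_range_toLin (P i) (EuclideanSpace.basisFun (Fin n) ℝ).toBasis
        (EuclideanSpace.basisFun (Fin n) ℝ).toBasis, ← toEuclideanLin_eq_toLin_orthonormal]
  let B : ∀ i, OrthonormalBasis {j // b j = i} ℝ (V i) :=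
    fun i => (stdOrthonormalBasis ℝ (V i)).reindex (Fintype.equivOfCardEq (hcard i))
  let W : Fin n → EuclideanSpace ℝ (Fin n) := fun j => B (b j) ⟨j, rfl⟩
  have hW : Orthonormal ℝ W := by
    have h := (hfam.orthonormal_sigma_orthonormal fun i => (B i).orthonormal).comp _
      (Equiv.sigmaFiberEquiv b).symm.injective
    exact h
  refine ⟨W, hW, fun i k => ?_⟩
  split_ifs with h
  · exact hfix i _ (h ▸ (B (b k) ⟨k, rfl⟩).2)
  · exact hkill i (b k) (Ne.symm h) _ (B (b k) ⟨k, rfl⟩).2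

theorem exists_orthogonal_frame (hP : IsFlag b P) :
    ∃ Q : Matrix (Fin n) (Fin n) ℝ, Qᵀ * Q = 1 ∧ ∀ i, Q * stdProj b i * Qᵀ = P i := by
  obtain ⟨W, hW, hPW⟩ := hP.exists_orthonormal_adapted_family
  let Q : Matrix (Fin n) (Fin n) ℝ := Matrix.of fun m k => W k m
  have hQ : Qᵀ * Q = 1 := by
    ext j k
    rw [mul_apply, one_apply, ← orthonormal_iff_ite.1 hW j k]
    simp only [Q, transpose_apply, of_apply, PiLp.inner_apply, RCLike.inner_apply, conj_trivial]
    exact Finset.sum_congr rfl fun _ _ => mul_comm _ _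
  have hQP : ∀ i, Q * stdProj b i = P i * Q := by
    intro i
    ext m k
    change _ = (toEuclideanLin (P i) (W k)).ofLp m
    rw [hPW, stdProj, mul_diagonal]
    split_ifs <;> simp [Q]
  refine ⟨Q, hQ, fun i => ?_⟩
  rw [hQP, Matrix.mul_assoc, mul_eq_one_comm.1 hQ, Matrix.mul_one]

theorem sum_eq_one (hP : IsFlag b P) : ∑ i, P i = 1 := by
  obtain ⟨Q, hQ, hQP⟩ := hP.exists_orthogonal_frame
  simp_rw [← hQP, ← Finset.sum_mul, ← Finset.mul_sum, sum_stdProj, Matrix.mul_one,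
    mul_eq_one_comm.1 hQ]

theorem exists_special_orthogonal_frame (hn : 1 ≤ n) (hP : IsFlag b P) :
    ∃ Q : Matrix (Fin n) (Fin n) ℝ, Qᵀ * Q = 1 ∧ Q.det = 1 ∧
      ∀ i, Q * stdProj b i * Qᵀ = P i := by
  obtain ⟨Q, hQ, hQP⟩ := hP.exists_orthogonal_frame
  have hdet : Q.det * Q.det = 1 := by
    simpa only [det_mul, det_transpose, det_one] using congrArg det hQ
  -- Rescaling the first column by `det Q = ±1` fixes the determinant and, being diagonal,
  -- commutes with every `stdProj b i`.
  let ε : Fin n → ℝ := Function.update 1 ⟨0, hn⟩ Q.det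
  have hε : ∀ j, ε j * ε j = 1 := fun j => by
    rcases eq_or_ne j ⟨0, hn⟩ with rfl | h
    · simpa [ε] using hdet
    · simp [ε, h]
  have hεd : ∀ d : Fin n → ℝ, diagonal ε * diagonal d * diagonal ε = diagonal d := fun d => by
    rw [diagonal_mul_diagonal, diagonal_mul_diagonal]
    congr 1
    funext j
    rw [mul_right_comm, hε, one_mul]
  refine ⟨Q * diagonal ε, ?_, ?_, fun i => ?_⟩
  · rw [transpose_mul, diagonal_transpose, Matrix.mul_assoc, ← Matrix.mul_assoc Qᵀ, hQ,
      Matrix.one_mul, diagonal_mul_diagonal, ← diagonal_one]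
    exact congrArg diagonal (funext hε)
  · simp [ε, det_diagonal, Finset.prod_update_of_mem, hdet]
  · calc Q * diagonal ε * stdProj b i * (Q * diagonal ε)ᵀ
        = Q * (diagonal ε * stdProj b i * diagonal ε) * Qᵀ := by
          simp only [transpose_mul, diagonal_transpose, Matrix.mul_assoc]
      _ = P i := by rw [stdProj, hεd, ← stdProj, hQP]

end IsFlag

section RadialRetraction

variable {E : Type*} [NormedAddCommGroup E] [NormedSpace ℝ E] {ρ : ℝ}

noncomputable def radialRetraction (ρ : ℝ) (x : E) : E := (ρ / max ρ ‖x‖) • x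

lemma norm_radialRetraction_le (hρ : 0 < ρ) (x : E) : ‖radialRetraction ρ x‖ ≤ ρ := by
  have hm : 0 < max ρ ‖x‖ := lt_max_of_lt_left hρ
  rw [radialRetraction, norm_smul, Real.norm_of_nonneg (by positivity), div_mul_eq_mul_div,
    div_le_iff₀ hm]
  exact mul_le_mul_of_nonneg_left (le_max_right _ _) hρ.le

lemma radialRetraction_of_norm_le (hρ : 0 < ρ) {x : E} (h : ‖x‖ ≤ ρ) :
    radialRetraction ρ x = x := by
  rw [radialRetraction, max_eq_left h, div_self hρ.ne', one_smul]

lemma lipschitzWith_radialRetraction (hρ : 0 < ρ) :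
    LipschitzWith 2 (radialRetraction (E := E) ρ) := by
  refine LipschitzWith.of_dist_le_mul fun x y => ?_
  set mx := max ρ ‖x‖
  set my := max ρ ‖y‖
  have hmx : 0 < mx := lt_max_of_lt_left hρ
  have hmy : 0 < my := lt_max_of_lt_left hρ
  have hsplit : radialRetraction ρ x - radialRetraction ρ y =
      (ρ / mx) • (x - y) + (ρ / mx - ρ / my) • y := by
    simp only [radialRetraction, smul_sub, sub_smul, mx, my]
    abel
  have h₁ : ‖(ρ / mx) • (x - y)‖ ≤ ‖x - y‖ := by
    rw [norm_smul, Real.norm_of_nonneg (by positivity)]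
    exact mul_le_of_le_one_left (norm_nonneg _) ((div_le_one hmx).2 (le_max_left _ _))
  have h₂ : ‖(ρ / mx - ρ / my) • y‖ ≤ ‖x - y‖ := by
    have hm : |my - mx| ≤ ‖x - y‖ := by
      simpa only [mx, my, max_comm ρ, norm_sub_rev x y] using
        (abs_max_sub_max_le_abs ‖y‖ ‖x‖ ρ).trans (abs_norm_sub_norm_le y x)
    have hy : ‖y‖ ≤ my := le_max_right _ _
    have hρx : ρ ≤ mx := le_max_left _ _
    rw [norm_smul, Real.norm_eq_abs, div_sub_div _ _ hmx.ne' hmy.ne', abs_div,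
      abs_of_pos (mul_pos hmx hmy), div_mul_eq_mul_div, div_le_iff₀ (mul_pos hmx hmy)]
    calc |ρ * my - mx * ρ| * ‖y‖ = ρ * |my - mx| * ‖y‖ := by
          rw [mul_comm mx ρ, ← mul_sub, abs_mul, abs_of_pos hρ]
      _ ≤ mx * ‖x - y‖ * my := by gcongr
      _ = ‖x - y‖ * (mx * my) := by ring
  rw [dist_eq_norm, dist_eq_norm, hsplit, NNReal.coe_ofNat, two_mul]
  exact (norm_add_le _ _).trans (add_le_add h₁ h₂)

end RadialRetraction

section GlobalODE

open Set

variable {E : Type*} [NormedAddCommGroup E] [NormedSpace ℝ E] [CompleteSpace E]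
  {v : ℝ → E → E} {J : Set ℝ} {t₀ : ℝ}

lemma Set.OrdConnected.exists_Icc_subset_of_mem_of_mem (hJ : IsOpen J)
    (hJc : J.OrdConnected) {x y : ℝ} (hx : x ∈ J) (hy : y ∈ J) :
    ∃ a c, Icc a c ⊆ J ∧ x ∈ Ioo a c ∧ y ∈ Ioo a c := by
  obtain ⟨a₁, c₁, -, hx₁, hJ₁⟩ := exists_Icc_mem_subset_of_mem_nhds (hJ.mem_nhds hx)
  obtain ⟨a₂, c₂, -, hy₂, hJ₂⟩ := exists_Icc_mem_subset_of_mem_nhds (hJ.mem_nhds hy)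
  rw [Icc_mem_nhds_iff] at hx₁ hy₂
  have ha : min a₁ a₂ ∈ J := by
    rcases min_choice a₁ a₂ with h | h <;> rw [h]
    exacts [hJ₁ (left_mem_Icc.2 (hx₁.1.trans hx₁.2).le),
      hJ₂ (left_mem_Icc.2 (hy₂.1.trans hy₂.2).le)]
  have hc : max c₁ c₂ ∈ J := by
    rcases max_choice c₁ c₂ with h | h <;> rw [h]
    exacts [hJ₁ (right_mem_Icc.2 (hx₁.1.trans hx₁.2).le),
      hJ₂ (right_mem_Icc.2 (hy₂.1.trans hy₂.2).le)]
  exact ⟨_, _, hJc.out ha hc, ⟨min_lt_of_left_lt hx₁.1, lt_max_of_lt_left hx₁.2⟩,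
    ⟨min_lt_of_right_lt hy₂.1, lt_max_of_lt_right hy₂.2⟩⟩

theorem exists_forall_mem_Ioo_hasDerivAt_of_lipschitzWith {a c : ℝ} {K L : ℝ≥0}
    (hcont : ∀ x, ContinuousOn (v · x) (Icc a c))
    (hlip : ∀ t ∈ Icc a c, LipschitzWith K (v t)) (hbdd : ∀ t ∈ Icc a c, ∀ x, ‖v t x‖ ≤ L)
    (ht₀ : t₀ ∈ Icc a c) (x₀ : E) :
    ∃ α : ℝ → E, α t₀ = x₀ ∧ ∀ t ∈ Ioo a c, HasDerivAt α (v t (α t)) t := by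
  have hpl : IsPicardLindelof v (tmin := a) (tmax := c) ⟨t₀, ht₀⟩ x₀
      (L * ⟨max (c - t₀) (t₀ - a), le_max_of_le_left (by linarith [ht₀.2])⟩) 0 L K :=
    { lipschitzOnWith := fun t ht => (hlip t ht).lipschitzOnWith
      continuousOn := fun x _ => hcont x
      norm_le := fun t ht x _ => hbdd t ht x
      mul_max_le := by simp; exact le_rfl }
  obtain ⟨α, hα₀, hα⟩ := hpl.exists_eq_forall_mem_Icc_hasDerivWithinAt₀
  exact ⟨α, hα₀, fun t ht => (hα t (Ioo_subset_Icc_self ht)).hasDerivAt (Icc_mem_nhds ht.1 ht.2)⟩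

theorem exists_forall_mem_hasDerivAt_of_locally_lipschitzWith (hJ : IsOpen J)
    (hJc : J.OrdConnected) (hcont : ∀ x, ContinuousOn (v · x) J)
    (hloc : ∀ a c, Icc a c ⊆ J → ∃ K L : ℝ≥0,
      ∀ t ∈ Icc a c, LipschitzWith K (v t) ∧ ∀ x, ‖v t x‖ ≤ L)
    (ht₀ : t₀ ∈ J) (x₀ : E) :
    ∃ α : ℝ → E, α t₀ = x₀ ∧ ∀ t ∈ J, HasDerivAt α (v t (α t)) t := by
  have hlocal : ∀ x ∈ J, ∃ a c, Icc a c ⊆ J ∧ x ∈ Ioo a c ∧ t₀ ∈ Ioo a c ∧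
      ∃ α : ℝ → E, α t₀ = x₀ ∧ ∀ t ∈ Ioo a c, HasDerivAt α (v t (α t)) t := by
    intro x hx
    obtain ⟨a, c, hac, hxac, ht₀ac⟩ := hJc.exists_Icc_subset_of_mem_of_mem hJ hx ht₀
    obtain ⟨K, L, hKL⟩ := hloc a c hac
    exact ⟨a, c, hac, hxac, ht₀ac, exists_forall_mem_Ioo_hasDerivAt_of_lipschitzWith
      (fun y => (hcont y).mono hac) (fun t ht => (hKL t ht).1) (fun t ht => (hKL t ht).2)
      (Ioo_subset_Icc_self ht₀ac) x₀⟩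
  choose! a c hac hx ht₀ac α hα₀ hα using hlocal
  -- Local solutions agree where their intervals overlap, so `x ↦ α x x` is a global solution.
  refine ⟨fun x => α x x, ?_, fun x hxJ => ?_⟩
  · exact hα₀ t₀ ht₀
  obtain ⟨K, _, hK⟩ := hloc (a x) (c x) (hac x hxJ)
  have hagree : ∀ y ∈ Ioo (a x) (c x), α y y = α x y := by
    intro y hy
    have hyJ : y ∈ J := hac x hxJ (Ioo_subset_Icc_self hy)
    have hsub : Ioo (max (a x) (a y)) (min (c x) (c y)) ⊆ Ioo (a x) (c x) ∩ Ioo (a y) (c y) :=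
      fun t ht => ⟨⟨(le_max_left _ _).trans_lt ht.1, ht.2.trans_le (min_le_left _ _)⟩,
        ⟨(le_max_right _ _).trans_lt ht.1, ht.2.trans_le (min_le_right _ _)⟩⟩
    refine ODE_solution_unique_of_mem_Ioo (s := fun _ => univ)
      (fun t ht => (hK t (Ioo_subset_Icc_self (hsub ht).1)).1.lipschitzOnWith)
      (t₀ := t₀) ⟨max_lt (ht₀ac x hxJ).1 (ht₀ac y hyJ).1, lt_min (ht₀ac x hxJ).2 (ht₀ac y hyJ).2⟩
      (fun t ht => ⟨hα y hyJ t (hsub ht).2, trivial⟩)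
      (fun t ht => ⟨hα x hxJ t (hsub ht).1, trivial⟩) ((hα₀ y hyJ).trans (hα₀ x hxJ).symm)
      ⟨max_lt hy.1 (hx y hyJ).1, lt_min hy.2 (hx y hyJ).2⟩
  have heq : (fun y => α y y) =ᶠ[𝓝 x] α x :=
    Filter.eventually_of_mem (Ioo_mem_nhds (hx x hxJ).1 (hx x hxJ).2) hagree
  exact (hα x hxJ x (hx x hxJ)).congr_of_eventuallyEq heq

theorem exists_forall_mem_hasDerivAt_clm_radialRetraction (hJ : IsOpen J)
    (hJc : J.OrdConnected) {L : ℝ → E →L[ℝ] E} (hL : ContinuousOn L J) {ρ : ℝ} (hρ : 0 < ρ)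
    (ht₀ : t₀ ∈ J) (x₀ : E) :
    ∃ α : ℝ → E, α t₀ = x₀ ∧ ∀ t ∈ J, HasDerivAt α (L t (radialRetraction ρ (α t))) t := by
  refine exists_forall_mem_hasDerivAt_of_locally_lipschitzWith hJ hJc
    (fun x => hL.clm_apply continuousOn_const) (fun a c hac => ?_) ht₀ x₀
  obtain ⟨C, hC⟩ := isCompact_Icc.exists_bound_of_continuousOn (hL.mono hac)
  have hC' : ∀ t ∈ Icc a c, ‖L t‖₊ ≤ C.toNNReal := fun t ht => by
    rw [← NNReal.coe_le_coe, Real.coe_toNNReal', coe_nnnorm]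
    exact (hC t ht).trans (le_max_left _ _)
  refine ⟨C.toNNReal * 2, C.toNNReal * ρ.toNNReal, fun t ht => ⟨?_, fun x => ?_⟩⟩
  · exact ((L t).lipschitz.comp (lipschitzWith_radialRetraction hρ)).weaken
      (mul_le_mul_left (hC' t ht) 2)
  · calc ‖L t (radialRetraction ρ x)‖ ≤ ‖L t‖ * ‖radialRetraction ρ x‖ := (L t).le_opNorm _
      _ ≤ C.toNNReal * ρ.toNNReal := by
        gcongr
        · exact hC' t ht
        · rw [Real.coe_toNNReal _ hρ.le]; exact norm_radialRetraction_le hρ x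

end GlobalODE

section MatrixCalculus

variable {m : Type*} [Fintype m] {t : ℝ}

theorem HasDerivAt.matrix_mul {f g : ℝ → Matrix m m ℝ} {f' g' : Matrix m m ℝ}
    (hf : HasDerivAt f f' t) (hg : HasDerivAt g g' t) :
    HasDerivAt (fun s => f s * g s) (f' * g t + f t * g') t := by
  refine hasDerivAt_pi.2 fun i => hasDerivAt_pi.2 fun j => ?_
  simp only [mul_apply, Matrix.add_apply, ← Finset.sum_add_distrib]
  exact HasDerivAt.fun_sum fun k _ =>
    (hasDerivAt_pi.1 (hasDerivAt_pi.1 hf i) k).fun_mul (hasDerivAt_pi.1 (hasDerivAt_pi.1 hg k) j)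

theorem HasDerivAt.matrix_transpose {f : ℝ → Matrix m m ℝ} {f' : Matrix m m ℝ}
    (hf : HasDerivAt f f' t) : HasDerivAt (fun s => (f s)ᵀ) f'ᵀ t :=
  hasDerivAt_pi.2 fun i => hasDerivAt_pi.2 fun j => hasDerivAt_pi.1 (hasDerivAt_pi.1 hf j) i

theorem HasDerivAt.matrix_mul_unique {f g h : ℝ → Matrix m m ℝ} {f' g' h' : Matrix m m ℝ}
    (hf : HasDerivAt f f' t) (hg : HasDerivAt g g' t) (hh : HasDerivAt h h' t)
    (hfg : (fun s => f s * g s) =ᶠ[𝓝 t] h) : f' * g t + f t * g' = h' :=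
  ((hf.matrix_mul hg).congr_of_eventuallyEq hfg.symm).unique hh

end MatrixCalculus

theorem IsPreconnected.apply_eq_of_hasDerivAt_zero {F : Type*} [NormedAddCommGroup F]
    [NormedSpace ℝ F] {J : Set ℝ} (hJc : IsPreconnected J) (hJ : IsOpen J) {f : ℝ → F}
    (hf : ∀ t ∈ J, HasDerivAt f 0 t) {x y : ℝ} (hx : x ∈ J) (hy : y ∈ J) : f x = f y :=
  hJ.is_const_of_deriv_eq_zero hJc (fun t ht => (hf t ht).differentiableAt.differentiableWithinAt)
    (fun t ht => (hf t ht).deriv) hx hy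

theorem IsOpen.contDiffOn_one_of_hasDerivAt {F : Type*} [NormedAddCommGroup F]
    [NormedSpace ℝ F] {J : Set ℝ} (hJ : IsOpen J) {f f' : ℝ → F}
    (hf : ∀ t ∈ J, HasDerivAt f (f' t) t) (hf' : ContinuousOn f' J) : ContDiffOn ℝ 1 f J := by
  rw [show (1 : WithTop ℕ∞) = 0 + 1 from rfl, contDiffOn_succ_iff_deriv_of_isOpen hJ]
  exact ⟨fun t ht => (hf t ht).differentiableAt.differentiableWithinAt, by simp,
    contDiffOn_zero.2 (hf'.congr fun t ht => (hf t ht).deriv)⟩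

section FlagConnection

variable {ι m : Type*} [Fintype ι] [Fintype m]

noncomputable def flagConnection (P : ι → ℝ → Matrix m m ℝ) (t : ℝ) : Matrix m m ℝ :=
  (2⁻¹ : ℝ) • ∑ i, ⁅deriv (P i) t, P i t⁆

theorem continuousOn_flagConnection [DecidableEq m] {J : Set ℝ} (hJ : IsOpen J)
    {P : ι → ℝ → Matrix m m ℝ} (hP : ∀ i, ContDiffOn ℝ 1 (P i) J) :
    ContinuousOn (flagConnection P) J := by
  have hlie : ∀ i, ContinuousOn (fun t => ⁅deriv (P i) t, P i t⁆) J := fun i => by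
    have hD : ContinuousOn (deriv (P i)) J := (hP i).continuousOn_deriv_of_isOpen hJ le_rfl
    have hPc : ContinuousOn (P i) J := (hP i).continuousOn
    simp only [Ring.lie_def]
    exact (hD.mul hPc).sub (hPc.mul hD)
  exact (continuousOn_finsetSum _ fun i _ => hlie i).fun_const_smul _

theorem transpose_flagConnection {P : ι → ℝ → Matrix m m ℝ} {t : ℝ}
    (hP : ∀ i, DifferentiableAt ℝ (P i) t) (hsymm : ∀ᶠ s in 𝓝 t, ∀ i, (P i s)ᵀ = P i s) :
    (flagConnection P t)ᵀ = -flagConnection P t := by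
  have hD : ∀ i, (deriv (P i) t)ᵀ = deriv (P i) t := fun i =>
    ((hP i).hasDerivAt.matrix_transpose.congr_of_eventuallyEq
      (hsymm.mono fun s hs => (hs i).symm)).unique (hP i).hasDerivAt
  simp only [flagConnection, transpose_smul, transpose_sum, Ring.lie_def, transpose_sub,
    transpose_mul, hD, hsymm.self_of_nhds, ← smul_neg, ← Finset.sum_neg_distrib, neg_sub]

theorem lie_flagConnection {n r : ℕ} {b : Fin n → Fin r}
    {P : Fin r → ℝ → Matrix (Fin n) (Fin n) ℝ} {t : ℝ} (hP : ∀ i, DifferentiableAt ℝ (P i) t)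
    (hflag : ∀ᶠ s in 𝓝 t, IsFlag b (P · s))
    (i : Fin r) : ⁅flagConnection P t, P i t⁆ = deriv (P i) t := by
  have ht := hflag.self_of_nhds
  have hD : ∀ j, deriv (P j) t * P j t + P j t * deriv (P j) t = deriv (P j) t := fun j =>
    (hP j).hasDerivAt.matrix_mul_unique (hP j).hasDerivAt (hP j).hasDerivAt
      (hflag.mono fun s hs => hs.mul_self j)
  have hDorth : ∀ j k, j ≠ k → deriv (P j) t * P k t + P j t * deriv (P k) t = 0 :=
    fun j k hjk => (hP j).hasDerivAt.matrix_mul_unique (hP k).hasDerivAt (hasDerivAt_const t 0)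
      (hflag.mono fun s hs => hs.mul_eq_zero j k hjk)
  have h2 := lie_sum_lie_eq_two_nsmul ht.sum_eq_one ht.mul_self ht.mul_eq_zero hD hDorth i
  rw [Ring.lie_def] at h2 ⊢
  rw [flagConnection, Matrix.smul_mul, Matrix.mul_smul, ← smul_sub, h2, two_nsmul, ← two_smul ℝ,
    smul_smul, inv_mul_cancel₀ two_ne_zero, one_smul]

end FlagConnection

section OrthogonalTransport

variable {m : Type*} [Fintype m] [DecidableEq m] {J : Set ℝ}

theorem hasDerivAt_transpose_mul_mul_eq_zero {Q P : ℝ → Matrix m m ℝ} {A : Matrix m m ℝ} {t : ℝ}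
    (hQ : HasDerivAt Q (A * Q t) t) (hP : HasDerivAt P ⁅A, P t⁆ t) (hA : Aᵀ = -A) :
    HasDerivAt (fun s => (Q s)ᵀ * P s * Q s) 0 t := by
  convert (hQ.matrix_transpose.matrix_mul hP).matrix_mul hQ using 1
  rw [transpose_mul, hA, Ring.lie_def]
  noncomm_ring

theorem exists_hasDerivAt_mul_of_transpose_eq_neg (hJ : IsOpen J) (hJc : J.OrdConnected)
    {A : ℝ → Matrix m m ℝ} (hA : ContinuousOn A J) (hskew : ∀ t ∈ J, (A t)ᵀ = -A t) {t₀ : ℝ}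
    (ht₀ : t₀ ∈ J) {Q₀ : Matrix m m ℝ} (hQ₀ : Q₀ᵀ * Q₀ = 1) :
    ∃ Q : ℝ → Matrix m m ℝ, Q t₀ = Q₀ ∧ ∀ t ∈ J, HasDerivAt Q (A t * Q t) t ∧ (Q t)ᵀ * Q t = 1 := by
  let L : ℝ → Matrix m m ℝ →L[ℝ] Matrix m m ℝ :=
    fun t => (LinearMap.mulLeft ℝ (A t)).toContinuousLinearMap
  have hL : ContinuousOn L J :=
    (LinearMap.continuous_of_finiteDimensional
      ((LinearMap.toContinuousLinearMap : (Matrix m m ℝ →ₗ[ℝ] Matrix m m ℝ) ≃ₗ[ℝ] _).toLinearMap ∘ₗ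
        LinearMap.mul ℝ (Matrix m m ℝ))).comp_continuousOn hA
  obtain ⟨Q, hQt₀, hQ⟩ := exists_forall_mem_hasDerivAt_clm_radialRetraction hJ hJc hL one_pos ht₀ Q₀
  have horth : ∀ t ∈ J, (Q t)ᵀ * Q t = 1 := by
    have h0 : ∀ t ∈ J, HasDerivAt (fun s => (Q s)ᵀ * 1 * Q s) 0 t := fun t ht =>
      hasDerivAt_transpose_mul_mul_eq_zero (A := (1 / max 1 ‖Q t‖) • A t)
        ((hQ t ht).congr_deriv (by rw [Matrix.smul_mul]; exact (L t).map_smul _ _))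
        ((hasDerivAt_const t (1 : Matrix m m ℝ)).congr_deriv (by simp [Ring.lie_def]))
        (by rw [transpose_smul, hskew t ht, smul_neg])
    intro t ht
    simpa [hQt₀, hQ₀] using hJc.isPreconnected.apply_eq_of_hasDerivAt_zero hJ h0 ht ht₀
  refine ⟨Q, hQt₀, fun t ht => ⟨?_, horth t ht⟩⟩
  have hnorm : ‖Q t‖ ≤ 1 := entrywise_sup_norm_bound_of_unitary (mem_unitaryGroup_iff'.2 (by
    rw [star_eq_conjTranspose, conjTranspose_eq_transpose_of_trivial, horth t ht]))
  have h := hQ t ht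
  rw [radialRetraction_of_norm_le one_pos hnorm] at h
  exact h

theorem IsPreconnected.det_eq_one {Q : ℝ → Matrix m m ℝ} (hJ : IsPreconnected J)
    (hQ : ContinuousOn Q J) (horth : ∀ t ∈ J, (Q t)ᵀ * Q t = 1) {t₀ : ℝ} (ht₀ : t₀ ∈ J)
    (h₀ : (Q t₀).det = 1) {t : ℝ} (ht : t ∈ J) : (Q t).det = 1 :=
  hJ.eq_of_sq_eq (f := fun t => (Q t).det) (g := 1)
    ((continuous_id.matrix_det).comp_continuousOn hQ) continuousOn_const
    (fun s hs => by simpa [sq] using congrArg det (horth s hs)) (fun _ => one_ne_zero) ht₀ h₀ ht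

theorem mul_mul_transpose_eq_of_hasDerivAt_lie (hJ : IsOpen J) (hJc : IsPreconnected J)
    {Q P A : ℝ → Matrix m m ℝ} (hQ : ∀ t ∈ J, HasDerivAt Q (A t * Q t) t ∧ (Q t)ᵀ * Q t = 1)
    (hA : ∀ t ∈ J, (A t)ᵀ = -A t) (hP : ∀ t ∈ J, HasDerivAt P ⁅A t, P t⁆ t) {t₀ : ℝ}
    (ht₀ : t₀ ∈ J) {M : Matrix m m ℝ} (hM : Q t₀ * M * (Q t₀)ᵀ = P t₀) {t : ℝ} (ht : t ∈ J) :
    Q t * M * (Q t)ᵀ = P t := by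
  have hconst : (Q t)ᵀ * P t * Q t = (Q t₀)ᵀ * P t₀ * Q t₀ :=
    hJc.apply_eq_of_hasDerivAt_zero hJ (fun s hs =>
      hasDerivAt_transpose_mul_mul_eq_zero (hQ s hs).1 (hP s hs) (hA s hs)) ht ht₀
  have hQQ : Q t * (Q t)ᵀ = 1 := mul_eq_one_comm.1 (hQ t ht).2
  calc Q t * M * (Q t)ᵀ = Q t * ((Q t₀)ᵀ * (Q t₀ * M * (Q t₀)ᵀ) * Q t₀) * (Q t)ᵀ := by
        simp only [← Matrix.mul_assoc, (hQ t₀ ht₀).2, Matrix.one_mul]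
        simp only [Matrix.mul_assoc, (hQ t₀ ht₀).2, Matrix.mul_one]
    _ = P t := by
        rw [hM, ← hconst]
        simp only [← Matrix.mul_assoc, hQQ, Matrix.one_mul]
        simp only [Matrix.mul_assoc, hQQ, Matrix.mul_one]

end OrthogonalTransport

theorem exists_C1_special_orthogonal_frames_of_C1_flags_general
    {n r : ℕ} (hn : 1 ≤ n) (q : Fin r → ℕ)
    (b : Fin n → Fin r)
    (hb : ∀ i, (Finset.univ.filter fun j => b j = i).card = q i)
    (J : Set ℝ) (hJopen : IsOpen J) (hJconn : J.OrdConnected)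
    (P : Fin r → ℝ → Matrix (Fin n) (Fin n) ℝ)
    (hC1 : ∀ i, ContDiffOn ℝ 1 (P i) J)
    (hsymm : ∀ x ∈ J, ∀ i, (P i x)ᵀ = P i x)
    (hidem : ∀ x ∈ J, ∀ i, P i x * P i x = P i x)
    (horth : ∀ x ∈ J, ∀ i j, i ≠ j → P i x * P j x = 0)
    (hrank : ∀ x ∈ J, ∀ i, (P i x).rank = q i) :
    ∃ Q : ℝ → Matrix (Fin n) (Fin n) ℝ, ContDiffOn ℝ 1 Q J ∧
      ∀ x ∈ J, (Q x)ᵀ * Q x = 1 ∧ (Q x).det = 1 ∧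
        ∀ i, Q x * stdProj b i * (Q x)ᵀ = P i x := by
  rcases J.eq_empty_or_nonempty with rfl | ⟨t₀, ht₀⟩
  · exact ⟨0, contDiffOn_empty, fun _ h => h.elim⟩
  have hflag : ∀ t ∈ J, ∀ᶠ s in 𝓝 t, IsFlag b (P · s) := fun t ht =>
    Filter.eventually_of_mem (hJopen.mem_nhds ht) fun s hs =>
      ⟨hsymm s hs, hidem s hs, horth s hs, fun i => (hrank s hs i).trans (hb i).symm⟩
  have hdiff : ∀ t ∈ J, ∀ i, DifferentiableAt ℝ (P i) t := fun t ht i =>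
    ((hC1 i).differentiableOn one_ne_zero).differentiableAt (hJopen.mem_nhds ht)
  have hA := continuousOn_flagConnection hJopen hC1
  have hskew : ∀ t ∈ J, (flagConnection P t)ᵀ = -flagConnection P t := fun t ht =>
    transpose_flagConnection (hdiff t ht) ((hflag t ht).mono fun _ hs => hs.transpose_eq)
  obtain ⟨Q₀, hQ₀, hdet₀, hframe₀⟩ :=
    (hflag t₀ ht₀).self_of_nhds.exists_special_orthogonal_frame hn
  obtain ⟨Q, rfl, hQ⟩ := exists_hasDerivAt_mul_of_transpose_eq_neg hJopen hJconn hA hskew ht₀ hQ₀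
  have hQc : ContinuousOn Q J := fun t ht => (hQ t ht).1.continuousAt.continuousWithinAt
  refine ⟨Q, hJopen.contDiffOn_one_of_hasDerivAt (fun t ht => (hQ t ht).1) (hA.mul hQc),
    fun t ht => ⟨(hQ t ht).2, hJconn.isPreconnected.det_eq_one hQc (fun s hs => (hQ s hs).2) ht₀
      hdet₀ ht, fun i => ?_⟩⟩
  refine mul_mul_transpose_eq_of_hasDerivAt_lie hJopen hJconn.isPreconnected hQ hskew
    (fun s hs => ?_) ht₀ (hframe₀ i) ht
  rw [lie_flagConnection (hdiff s hs) (hflag s hs)]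
  exact (hdiff s hs i).hasDerivAt

/-- Let `J ⊆ ℝ` be an open interval and `(P_i(x))` a `C¹` family of flags of type `I`
parametrized by `x ∈ J`.  Then there exists a `C¹` map `Q : J → SO(n)` such that for every
`x ∈ J`, the frame `Q x` generates the flag `(P_i(x))`: `Q(x)ᵀ·Q(x) = 1`, `det Q(x) = 1` and
`Q(x)·P_0^i·Q(x)ᵀ = P_i(x)` for all `i`. -/
theorem exists_C1_special_orthogonal_frames_of_C1_flags
    {n r : ℕ} (hn : 1 ≤ n) (q : Fin r → ℕ) (hq : ∀ i, 0 < q i)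
    (b : Fin n → Fin r)
    (hb : ∀ i, (Finset.univ.filter fun j => b j = i).card = q i)
    (J : Set ℝ) (hJopen : IsOpen J) (hJconn : J.OrdConnected)
    (P : Fin r → ℝ → Matrix (Fin n) (Fin n) ℝ)
    (hC1 : ∀ i, ContDiffOn ℝ 1 (P i) J)
    (hsymm : ∀ x ∈ J, ∀ i, (P i x)ᵀ = P i x)
    (hidem : ∀ x ∈ J, ∀ i, P i x * P i x = P i x)
    (horth : ∀ x ∈ J, ∀ i j, i ≠ j → P i x * P j x = 0)
    (hrank : ∀ x ∈ J, ∀ i, (P i x).rank = q i) :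
    ∃ Q : ℝ → Matrix (Fin n) (Fin n) ℝ, ContDiffOn ℝ 1 Q J ∧
      ∀ x ∈ J, (Q x)ᵀ * Q x = 1 ∧ (Q x).det = 1 ∧
        ∀ i, Q x * stdProj b i * (Q x)ᵀ = P i x :=
  exists_C1_special_orthogonal_frames_of_C1_flags_general hn q b hb J hJopen hJconn P hC1 hsymm
    hidem horth hrank
end
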